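/- arXiv:1702.02286 — 8 statements merged into one kernel-verified Lean document; each statement's English description precedes it below -/
import Mathlib

section
/- Let σ > 0 and let β_i, β_j be real numbers with |β_i| > |β_j|. Let Z_i and Z_j be independent real random variables with Z_i distributed N(β_i, σ²) and Z_j distributed N(β_j, σ²). Then P(|Z_i| > |Z_j|) > 1/2. -/
/-!
Let `A = |Zᵢ|` and `B = |Zⱼ|`. The Gaussian mass of `[-t, t]` strictly decreases as the mean moves
away from `0`, so `P(A > t) > P(B > t)` for every `t > 0`. Integrating `t ↦ P(A > t)` against the
law of `B` gives `P(B < A)`; this strictly exceeds the same integral for `t ↦ P(B' > t)`, where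
`B'` is an independent copy of `B`, namely `P(B < B')`, which is `1/2` since `B` has no atoms.
-/

open MeasureTheory ProbabilityTheory Set
open scoped ENNReal NNReal

namespace Function.Even

variable {f : ℝ → ℝ}

lemma apply_abs (hf : f.Even) (x : ℝ) : f |x| = f x := by
  rcases abs_choice x with h | h <;> rw [h]
  exact hf x

lemma le_of_abs_le (hf : f.Even) (hanti : AntitoneOn f (Ici 0)) {x y : ℝ} (h : |x| ≤ |y|) :
    f y ≤ f x := by
  rw [← hf.apply_abs x, ← hf.apply_abs y]
  exact hanti (abs_nonneg x) (abs_nonneg y) h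

lemma lt_of_abs_lt (hf : f.Even) (hanti : StrictAntiOn f (Ici 0)) {x y : ℝ} (h : |x| < |y|) :
    f y < f x := by
  rw [← hf.apply_abs x, ← hf.apply_abs y]
  exact hanti (abs_nonneg x) (abs_nonneg y) h

/-- Passing from `m₂` to `m₁` trades the piece `[t - m₁, t - m₂]` of the window
`[-t - m, t - m]` for its translate by `-2t`, which lies farther from the origin. -/
lemma intervalIntegral_comp_sub_lt (hf : f.Even) (hcont : Continuous f)
    (hanti : StrictAntiOn f (Ici 0)) {t m₁ m₂ : ℝ} (ht : 0 < t) (hm₂ : 0 ≤ m₂) (hm : m₂ < m₁) :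
    ∫ x in -t..t, f (x - m₁) < ∫ x in -t..t, f (x - m₂) := by
  simp only [intervalIntegral.integral_comp_sub_right f]
  have hint (a b : ℝ) : IntervalIntegrable f volume a b := hcont.intervalIntegrable a b
  have hleft := intervalIntegral.integral_add_adjacent_intervals
    (hint (-t - m₁) (-t - m₂)) (hint (-t - m₂) (t - m₁))
  have hright := intervalIntegral.integral_add_adjacent_intervals
    (hint (-t - m₂) (t - m₁)) (hint (t - m₁) (t - m₂))
  have hshift : ∫ x in (-t - m₁)..(-t - m₂), f x = ∫ x in (t - m₁)..(t - m₂), f (x - 2 * t) := by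
    rw [intervalIntegral.integral_comp_sub_right f]
    ring_nf
  have hreflect {x : ℝ} (hx : x < t) : |x| < |x - 2 * t| := by
    rw [abs_of_neg (by linarith : x - 2 * t < 0), abs_lt]
    constructor <;> linarith
  have hcompare : ∫ x in (t - m₁)..(t - m₂), f (x - 2 * t) < ∫ x in (t - m₁)..(t - m₂), f x := by
    refine intervalIntegral.integral_lt_integral_of_continuousOn_of_le_of_exists_lt (by linarith)
      (by fun_prop) hcont.continuousOn (fun x hx => ?_) ⟨t - m₁, ⟨le_rfl, by linarith⟩, ?_⟩
    · rcases (lt_or_eq_of_le (hx.2.trans (by linarith : t - m₂ ≤ t))) with hxt | rfl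
      · exact hf.le_of_abs_le hanti.antitoneOn (hreflect hxt).le
      · exact hf.le_of_abs_le hanti.antitoneOn (by rw [show x - 2 * x = -x by ring, abs_neg])
    · exact hf.lt_of_abs_lt hanti (hreflect (by linarith))
  linarith

end Function.Even

section Gaussian

variable {v : ℝ≥0}

lemma even_gaussianPDFReal_zero (v : ℝ≥0) : (gaussianPDFReal 0 v).Even := by
  intro x
  simp [gaussianPDFReal]

lemma strictAntiOn_gaussianPDFReal_zero (hv : v ≠ 0) :
    StrictAntiOn (gaussianPDFReal 0 v) (Ici 0) := by
  intro x hx y _ hxy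
  simp only [gaussianPDFReal, sub_zero]
  gcongr

lemma gaussianReal_Icc_eq_ofReal_integral (hv : v ≠ 0) (b : ℝ) {t : ℝ} (ht : 0 ≤ t) :
    gaussianReal b v (Icc (-t) t) = ENNReal.ofReal (∫ x in -t..t, gaussianPDFReal 0 v (x - b)) := by
  simp only [gaussianPDFReal_sub, zero_add]
  rw [gaussianReal_apply_eq_integral _ hv, integral_Icc_eq_integral_Ioc,
    ← intervalIntegral.integral_of_le (by linarith)]

lemma gaussianReal_neg_Icc (b t : ℝ) :
    gaussianReal (-b) v (Icc (-t) t) = gaussianReal b v (Icc (-t) t) := by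
  rw [← gaussianReal_map_neg, Measure.map_apply measurable_neg measurableSet_Icc]
  simp

lemma gaussianReal_abs_Icc (b t : ℝ) :
    gaussianReal |b| v (Icc (-t) t) = gaussianReal b v (Icc (-t) t) := by
  rcases abs_choice b with h | h <;> rw [h]
  exact gaussianReal_neg_Icc b t

lemma gaussianReal_Icc_lt_of_abs_lt (hv : v ≠ 0) {t b₁ b₂ : ℝ} (ht : 0 < t) (h : |b₂| < |b₁|) :
    gaussianReal b₁ v (Icc (-t) t) < gaussianReal b₂ v (Icc (-t) t) := by
  rw [← gaussianReal_abs_Icc b₁, ← gaussianReal_abs_Icc b₂,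
    gaussianReal_Icc_eq_ofReal_integral hv _ ht.le, gaussianReal_Icc_eq_ofReal_integral hv _ ht.le]
  refine (ENNReal.ofReal_lt_ofReal_iff_of_nonneg ?_).2 ?_
  · exact intervalIntegral.integral_nonneg (by linarith) fun x _ => gaussianPDFReal_nonneg _ _ _
  · exact (even_gaussianPDFReal_zero v).intervalIntegral_comp_sub_lt
      (by unfold gaussianPDFReal; fun_prop)
      (strictAntiOn_gaussianPDFReal_zero hv) ht (abs_nonneg _) h

lemma map_abs_gaussianReal_Ioi_lt (hv : v ≠ 0) {t b₁ b₂ : ℝ} (ht : 0 < t) (h : |b₂| < |b₁|) :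
    (gaussianReal b₂ v).map abs (Ioi t) < (gaussianReal b₁ v).map abs (Ioi t) := by
  have hpre : abs ⁻¹' Ioi t = (Icc (-t) t)ᶜ := by
    ext x
    simp only [mem_preimage, mem_Ioi, mem_compl_iff, mem_Icc, ← abs_le, not_le]
  simp only [Measure.map_apply measurable_abs measurableSet_Ioi, hpre]
  exact (prob_compl_lt_one_sub_of_lt_prob (gaussianReal_Icc_lt_of_abs_lt hv ht h)
    measurableSet_Icc).trans_eq (prob_compl_eq_one_sub measurableSet_Icc).symm

end Gaussian

lemma nullSingletonClass_map_abs (ρ : Measure ℝ) [NullSingletonClass ρ] :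
    NullSingletonClass (ρ.map abs) where
  measure_singleton a := by
    rw [Measure.map_apply measurable_abs (measurableSet_singleton a)]
    refine ((toFinite {a, -a}).subset fun x (hx : |x| = a) => ?_).measure_zero ρ
    rcases abs_choice x with h | h
    · exact .inl (h ▸ hx)
    · exact .inr (by rw [mem_singleton_iff, ← hx, h, neg_neg])

lemma prod_apply_snd_lt_fst (ρ ν : Measure ℝ) [SFinite ρ] [SFinite ν] :
    ρ.prod ν {p | p.2 < p.1} = ∫⁻ y, ρ (Ioi y) ∂ν :=
  Measure.prod_apply_symm (measurableSet_lt measurable_snd measurable_fst)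

/-- Two independent samples of an atomless law tie with probability zero, so by symmetry each is
the larger one with probability `1/2`. -/
lemma prod_self_snd_lt_fst (ν : Measure ℝ) [IsProbabilityMeasure ν] [NullSingletonClass ν] :
    ν.prod ν {p | p.2 < p.1} = 1 / 2 := by
  have hlt : MeasurableSet {p : ℝ × ℝ | p.2 < p.1} := measurableSet_lt measurable_snd measurable_fst
  have heq : MeasurableSet {p : ℝ × ℝ | p.1 = p.2} :=
    measurableSet_eq_fun measurable_fst measurable_snd
  have hdiag : ν.prod ν {p | p.1 = p.2} = 0 := by
    rw [Measure.prod_apply heq]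
    simp [preimage]
  have hswap : ν.prod ν {p | p.1 < p.2} = ν.prod ν {p | p.2 < p.1} :=
    Measure.measurePreserving_swap.measure_preimage hlt.nullMeasurableSet
  have hcompl : {p : ℝ × ℝ | p.2 < p.1}ᶜ = {p | p.1 < p.2} ∪ {p | p.1 = p.2} := by
    ext p
    simp [le_iff_lt_or_eq]
  have htotal := prob_add_prob_compl (μ := ν.prod ν) hlt
  rw [hcompl, measure_union (by simp +contextual [disjoint_left, ne_of_lt]) heq, hdiag, add_zero,
    hswap, ← two_mul] at htotal
  exact (ENNReal.eq_div_iff two_ne_zero ENNReal.ofNat_ne_top).2 htotal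

lemma half_lt_prod_snd_lt_fst {ν : Measure ℝ} [IsProbabilityMeasure ν] [NullSingletonClass ν]
    (μ : Measure ℝ) [IsProbabilityMeasure μ]
    (h : ∀ᵐ t ∂ν, ν (Ioi t) < μ (Ioi t)) : 1 / 2 < μ.prod ν {p | p.2 < p.1} := by
  rw [← prod_self_snd_lt_fst ν, prod_apply_snd_lt_fst, prod_apply_snd_lt_fst]
  refine lintegral_strict_mono (IsProbabilityMeasure.ne_zero ν) ?_ ?_ h
  · exact (Antitone.measurable fun s t hst => measure_mono (Ioi_subset_Ioi hst)).aemeasurable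
  · exact (lintegral_mono fun _ => prob_le_one).trans_lt (by simp) |>.ne

/-- Lemma 1 (first part): if `|βj| < |βi|`, `Zi ~ N(βi, σ²)`, `Zj ~ N(βj, σ²)` are
independent, then `P(|Zi| > |Zj|) > 1/2`. -/
theorem stmt_0 {Ω : Type*} [MeasurableSpace Ω] (P : Measure Ω) [IsProbabilityMeasure P]
    (σ : ℝ≥0) (hσ : 0 < σ) (βi βj : ℝ) (hβ : |βj| < |βi|)
    (Zi Zj : Ω → ℝ) (hZi : Measurable Zi) (hZj : Measurable Zj)
    (hindep : IndepFun Zi Zj P)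
    (hdi : P.map Zi = gaussianReal βi (σ ^ 2))
    (hdj : P.map Zj = gaussianReal βj (σ ^ 2)) :
    (1 : ℝ≥0∞) / 2 < P {ω | |Zj ω| < |Zi ω|} := by
  have hv : σ ^ 2 ≠ 0 := pow_ne_zero _ hσ.ne'
  have := nullSingletonClass_gaussianReal (μ := βj) hv
  have := nullSingletonClass_map_abs (gaussianReal βj (σ ^ 2))
  have := (gaussianReal βi (σ ^ 2)).isProbabilityMeasure_map measurable_abs.aemeasurable
  have := (gaussianReal βj (σ ^ 2)).isProbabilityMeasure_map measurable_abs.aemeasurable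
  have hlaw : P.map (fun ω => (|Zi ω|, |Zj ω|)) =
      ((gaussianReal βi (σ ^ 2)).map abs).prod ((gaussianReal βj (σ ^ 2)).map abs) := by
    rw [← hdi, ← hdj, Measure.map_map measurable_abs hZi, Measure.map_map measurable_abs hZj]
    exact (indepFun_iff_map_prod_eq_prod_map_map (by fun_prop) (by fun_prop)).1
      (hindep.comp measurable_abs measurable_abs)
  have hpos : ∀ᵐ t ∂(gaussianReal βj (σ ^ 2)).map abs, 0 < t :=
    (ae_map_iff measurable_abs.aemeasurable measurableSet_Ioi).2 <| by
      filter_upwards [Measure.ae_ne _ 0] with x hx using abs_pos.2 hx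
  change 1 / 2 < P ((fun ω => (|Zi ω|, |Zj ω|)) ⁻¹' {p | p.2 < p.1})
  rw [← Measure.map_apply (by fun_prop) (measurableSet_lt measurable_snd measurable_fst), hlaw]
  refine half_lt_prod_snd_lt_fst _ ?_
  filter_upwards [hpos] with t ht using map_abs_gaussianReal_Ioi_lt hv ht hβ
end

section
/- Let σ > 0 and let β_i, β_j be real numbers with |β_i| = |β_j|. Let Z_i and Z_j be independent real random variables with Z_i distributed N(β_i, σ²) and Z_j distributed N(β_j, σ²). Then P(|Z_i| > |Z_j|) = 1/2. -/
/-!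
Since `N(-β, σ²)` is the reflection of `N(β, σ²)` and `|β_i| = |β_j|`, the variables `|Z_i|` and
`|Z_j|` are independent with a common law, and that law has no atoms because the Gaussian has none.
For an independent pair `(X, Y)` with a common atomless law, swapping the coordinates gives
`P(Y < X) = P(X < Y)` while the tie `X = Y` is null, so `P(Y < X) = 1/2`.
-/

open MeasureTheory ProbabilityTheory
open scoped ENNReal NNReal

namespace MeasureTheory

variable {α : Type*} [MeasurableSpace α]

theorem NullSingletonClass.map {β : Type*} [MeasurableSpace β] [MeasurableSingletonClass β]
    {μ : Measure α} [NullSingletonClass μ] {f : α → β} (hf : Measurable f)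
    (hfiber : ∀ y, (f ⁻¹' {y}).Countable) : NullSingletonClass (μ.map f) :=
  ⟨fun y => by
    rw [Measure.map_apply hf (measurableSet_singleton y)]
    exact (hfiber y).measure_zero μ⟩

namespace Measure

theorem prod_diagonal_eq_zero [MeasurableEq α] (μ ν : Measure α) [SFinite ν]
    [NullSingletonClass ν] : (μ.prod ν) (Set.diagonal α) = 0 := by
  rw [prod_apply measurableSet_diagonal]
  have hfiber : ∀ x : α, Prod.mk x ⁻¹' Set.diagonal α = {x} := fun x => by
    ext y; simp [eq_comm]
  simp [hfiber]

theorem prod_self_setOf_lt_eq_half [TopologicalSpace α] [LinearOrder α] [OrderClosedTopology α]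
    [SecondCountableTopology α] [OpensMeasurableSpace α]
    (μ : Measure α) [IsProbabilityMeasure μ] [NullSingletonClass μ] :
    (μ.prod μ) {p : α × α | p.2 < p.1} = 1 / 2 := by
  have hmeas : MeasurableSet {p : α × α | p.2 < p.1} :=
    measurableSet_lt measurable_snd measurable_fst
  have hswap : (μ.prod μ) {p : α × α | p.1 < p.2} = (μ.prod μ) {p : α × α | p.2 < p.1} :=
    (measurePreserving_swap (μ := μ) (ν := μ)).measure_preimage hmeas.nullMeasurableSet
  have hcompl : {p : α × α | p.2 < p.1}ᶜ = {p : α × α | p.1 < p.2} ∪ Set.diagonal α := by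
    ext p; simp [le_iff_lt_or_eq]
  have hdisj : Disjoint {p : α × α | p.1 < p.2} (Set.diagonal α) := by
    rw [Set.disjoint_left]; rintro p hlt (heq : p.1 = p.2); exact hlt.ne heq
  have htotal := measure_add_measure_compl (μ := μ.prod μ) hmeas
  rw [hcompl, measure_union hdisj measurableSet_diagonal, hswap, prod_diagonal_eq_zero, add_zero,
    measure_univ] at htotal
  rw [ENNReal.eq_div_iff two_ne_zero ENNReal.ofNat_ne_top, two_mul, htotal]

end Measure

end MeasureTheory

namespace ProbabilityTheory

theorem IndepFun.measure_setOf_lt_eq_half {Ω α : Type*} [MeasurableSpace Ω] [MeasurableSpace α]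
    [TopologicalSpace α] [LinearOrder α] [OrderClosedTopology α] [SecondCountableTopology α]
    [OpensMeasurableSpace α] {P : Measure Ω} [IsProbabilityMeasure P] {X Y : Ω → α}
    {μ : Measure α} [NullSingletonClass μ] (hXY : IndepFun X Y P) (hX : Measurable X)
    (hY : Measurable Y) (hXμ : P.map X = μ) (hYμ : P.map Y = μ) :
    P {ω | Y ω < X ω} = 1 / 2 := by
  have : IsProbabilityMeasure μ := hXμ ▸ Measure.isProbabilityMeasure_map hX.aemeasurable
  have hjoint : P.map (fun ω => (X ω, Y ω)) = μ.prod μ := by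
    rw [(indepFun_iff_map_prod_eq_prod_map_map hX.aemeasurable hY.aemeasurable).mp hXY, hXμ, hYμ]
  rw [← μ.prod_self_setOf_lt_eq_half, ← hjoint,
    Measure.map_apply (hX.prodMk hY) (measurableSet_lt measurable_snd measurable_fst)]
  rfl

lemma gaussianReal_map_abs_of_abs_eq {μ μ' : ℝ} (v : ℝ≥0) (h : |μ| = |μ'|) :
    (gaussianReal μ v).map (|·|) = (gaussianReal μ' v).map (|·|) := by
  rcases abs_eq_abs.mp h with rfl | rfl
  · rfl
  · rw [← gaussianReal_map_neg, Measure.map_map measurable_abs measurable_neg]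
    simp only [Function.comp_def, abs_neg]

lemma nullSingletonClass_gaussianReal_map_abs (μ : ℝ) {v : ℝ≥0} (hv : v ≠ 0) :
    NullSingletonClass ((gaussianReal μ v).map (|·|)) := by
  have := nullSingletonClass_gaussianReal (μ := μ) hv
  refine .map measurable_abs fun y => (Set.toFinite {y, -y}).countable.mono ?_
  intro x (hx : |x| = y)
  rcases abs_choice x with h | h <;> simp [← hx, h]

end ProbabilityTheory

/-- Lemma 1 (second part): if `|βi| = |βj|`, `Zi ~ N(βi, σ²)`, `Zj ~ N(βj, σ²)` are
independent, then `P(|Zi| > |Zj|) = 1/2`. -/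
theorem stmt_1 {Ω : Type*} [MeasurableSpace Ω] (P : Measure Ω) [IsProbabilityMeasure P]
    (σ : ℝ≥0) (hσ : 0 < σ) (βi βj : ℝ) (hβ : |βi| = |βj|)
    (Zi Zj : Ω → ℝ) (hZi : Measurable Zi) (hZj : Measurable Zj)
    (hindep : IndepFun Zi Zj P)
    (hdi : P.map Zi = gaussianReal βi (σ ^ 2))
    (hdj : P.map Zj = gaussianReal βj (σ ^ 2)) :
    P {ω | |Zj ω| < |Zi ω|} = 1 / 2 := by
  have := nullSingletonClass_gaussianReal_map_abs βi (pow_ne_zero 2 hσ.ne')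
  have hlaw_i : P.map ((|·|) ∘ Zi) = (gaussianReal βi (σ ^ 2)).map (|·|) := by
    rw [← Measure.map_map measurable_abs hZi, hdi]
  have hlaw_j : P.map ((|·|) ∘ Zj) = (gaussianReal βi (σ ^ 2)).map (|·|) := by
    rw [← Measure.map_map measurable_abs hZj, hdj, gaussianReal_map_abs_of_abs_eq _ hβ.symm]
  exact (hindep.comp measurable_abs measurable_abs).measure_setOf_lt_eq_half
    (measurable_abs.comp hZi) (measurable_abs.comp hZj) hlaw_i hlaw_j
end

section
/- Let σ > 0, let 0 ≤ a < b be real numbers, and let z > 0. Then Φ((z − a)/σ) + Φ((z + a)/σ) > Φ((z − b)/σ) + Φ((z + b)/σ). Equivalently, for z > 0 the folded-normal CDF value P(|N(a, σ²)| ≤ z) strictly exceeds P(|N(b, σ²)| ≤ z), so |N(b, σ²)| strictly stochastically dominates |N(a, σ²)|. -/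
/-! Write `F(c) = Φ(w - c) + Φ(w + c)` with `w = z/σ > 0`. Moving `c` up from `c₀ ≥ 0` to `c₁`,
the term `Φ(w + c)` gains `∫ s in c₀..c₁, φ(w + s)` while `Φ(w - c)` loses `∫ s in c₀..c₁, φ(w - s)`,
and for `s > 0` the point `w + s` is farther from `0` than `w - s`, so `φ(w + s) < φ(w - s)`.
Hence `F` is strictly decreasing on `[0, ∞)`. -/

open MeasureTheory ProbabilityTheory
open scoped ENNReal NNReal

/-- `Φ`, the cumulative distribution function of the standard normal distribution. -/
noncomputable def stdNormalCDF (x : ℝ) : ℝ :=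
  (gaussianReal 0 1 (Set.Iic x)).toReal

lemma continuous_gaussianPDFReal (μ : ℝ) (v : ℝ≥0) : Continuous (gaussianPDFReal μ v) := by
  unfold gaussianPDFReal
  fun_prop

lemma gaussianPDFReal_lt_gaussianPDFReal {μ : ℝ} {v : ℝ≥0} (hv : v ≠ 0) {x y : ℝ}
    (h : (x - μ) ^ 2 < (y - μ) ^ 2) : gaussianPDFReal μ v y < gaussianPDFReal μ v x := by
  unfold gaussianPDFReal
  have hv' : (0 : ℝ) < v := by positivity
  gcongr

lemma stdNormalCDF_eq_integral (x : ℝ) :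
    stdNormalCDF x = ∫ t in Set.Iic x, gaussianPDFReal 0 1 t := by
  rw [stdNormalCDF, gaussianReal_apply_eq_integral 0 one_ne_zero, ENNReal.toReal_ofReal]
  exact setIntegral_nonneg measurableSet_Iic fun t _ ↦ gaussianPDFReal_nonneg 0 1 t

lemma stdNormalCDF_sub_stdNormalCDF (u v : ℝ) :
    stdNormalCDF v - stdNormalCDF u = ∫ t in u..v, gaussianPDFReal 0 1 t := by
  rw [stdNormalCDF_eq_integral, stdNormalCDF_eq_integral]
  exact intervalIntegral.integral_Iic_sub_Iic (integrable_gaussianPDFReal 0 1).integrableOn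
    (integrable_gaussianPDFReal 0 1).integrableOn

lemma strictAntiOn_stdNormalCDF_sub_add_stdNormalCDF_add {w : ℝ} (hw : 0 < w) :
    StrictAntiOn (fun c ↦ stdNormalCDF (w - c) + stdNormalCDF (w + c)) (Set.Ici 0) := by
  intro c (hc : 0 ≤ c) d _ hcd
  have hplus : stdNormalCDF (w + d) - stdNormalCDF (w + c)
      = ∫ s in c..d, gaussianPDFReal 0 1 (w + s) := by
    rw [stdNormalCDF_sub_stdNormalCDF, intervalIntegral.integral_comp_add_left]
  have hminus : stdNormalCDF (w - c) - stdNormalCDF (w - d)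
      = ∫ s in c..d, gaussianPDFReal 0 1 (w - s) := by
    rw [stdNormalCDF_sub_stdNormalCDF, intervalIntegral.integral_comp_sub_left]
  have hpdf : ∀ s, 0 < s → gaussianPDFReal 0 1 (w + s) < gaussianPDFReal 0 1 (w - s) :=
    fun s hs ↦ gaussianPDFReal_lt_gaussianPDFReal one_ne_zero (by nlinarith)
  have hcont := continuous_gaussianPDFReal 0 1
  have hintegral : (∫ s in c..d, gaussianPDFReal 0 1 (w + s))
      < ∫ s in c..d, gaussianPDFReal 0 1 (w - s) :=
    intervalIntegral.integral_lt_integral_of_continuousOn_of_le_of_exists_lt hcd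
      (by fun_prop) (by fun_prop) (fun s hs ↦ (hpdf s (hc.trans_lt hs.1)).le)
      ⟨d, Set.right_mem_Icc.mpr hcd.le, hpdf d (hc.trans_lt hcd)⟩
  dsimp only
  linarith

/-- Strict stochastic dominance of folded normals: for `σ > 0`, `0 ≤ a < b` and `z > 0`,
`Φ((z − a)/σ) + Φ((z + a)/σ) > Φ((z − b)/σ) + Φ((z + b)/σ)`. -/
theorem stmt_3 (σ : ℝ) (hσ : 0 < σ) (a b : ℝ) (ha : 0 ≤ a) (hab : a < b)
    (z : ℝ) (hz : 0 < z) :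
    stdNormalCDF ((z - b) / σ) + stdNormalCDF ((z + b) / σ) <
      stdNormalCDF ((z - a) / σ) + stdNormalCDF ((z + a) / σ) := by
  have h := strictAntiOn_stdNormalCDF_sub_add_stdNormalCDF_add (div_pos hz hσ)
    (div_nonneg ha hσ.le) (div_nonneg (ha.trans hab.le) hσ.le) (div_lt_div_of_pos_right hab hσ)
  simpa only [sub_div, add_div] using h
end

section
/- Let n, p ≥ 1, let X be an n × p real matrix, β₀ ∈ ℝᵖ, and let d, D > 0 be such that nd ‖v‖² ≤ vᵀ(XᵀX)v ≤ nD ‖v‖² for all v ∈ ℝᵖ. Let ε : Ω → ℝⁿ be a random vector on a probability space with square-integrable components satisfying E[ε_i] = 0, E[ε_i²] = σ², and E[ε_i ε_j] = 0 for i ≠ j. Let λ > 0, set y = Xβ₀ + ε, and let β̂ = (XᵀX + λI_p)⁻¹ Xᵀ y be the ridge estimator. Then E[‖β̂ − β₀‖²] ≤ 2 (λ² ‖β₀‖² + n p D σ²) / (nd + λ)². -/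
/-!
With `c = nd + λ`, the ridge matrix `A = XᵀX + λI` satisfies `c‖w‖² ≤ wᵀAw`, so `A⁻¹` (and
`A⁻ᵀ`) shrink Euclidean norms by the factor `1/c`. Writing `M = A⁻¹Xᵀ`, the estimation error is
`β̂ − β₀ = Mε − λA⁻¹β₀`. The bias term has squared norm at most `λ²‖β₀‖²/c²`. Since the errors are
uncorrelated, the noise term has mean square `σ² ∑ⱼ ∑ᵢ Mⱼᵢ²`, and row `j` of `M` is `X` applied to
row `j` of `A⁻¹`, so the upper eigenvalue bound gives it squared norm at most `nD/c²`. Conclude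
with `(a - b)² ≤ 2a² + 2b²`.
-/

open MeasureTheory Matrix

namespace Matrix

def CoerciveWith {ι : Type*} [Fintype ι] (c : ℝ) (A : Matrix ι ι ℝ) : Prop :=
  ∀ w : ι → ℝ, c * ∑ j, w j ^ 2 ≤ w ⬝ᵥ A *ᵥ w

namespace CoerciveWith

variable {ι : Type*} [Fintype ι] {A : Matrix ι ι ℝ} {c : ℝ}

theorem transpose (hA : CoerciveWith c A) : CoerciveWith c Aᵀ := fun w => by
  rw [dotProduct_mulVec, vecMul_transpose, dotProduct_comm]
  exact hA w

variable [DecidableEq ι]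

theorem add_smul_one (hA : CoerciveWith c A) (lam : ℝ) :
    CoerciveWith (c + lam) (A + lam • 1) := fun w => by
  have hww : w ⬝ᵥ w = ∑ j, w j ^ 2 := by simp only [dotProduct, sq]
  rw [add_mulVec, smul_mulVec, one_mulVec, dotProduct_add, dotProduct_smul, smul_eq_mul, hww]
  linarith [hA w]

theorem isUnit_det (hA : CoerciveWith c A) (hc : 0 < c) : IsUnit A.det := by
  rw [isUnit_iff_ne_zero]
  intro hdet
  obtain ⟨v, hv, hAv⟩ := exists_mulVec_eq_zero_iff.2 hdet
  have hv0 : ∑ j, v j ^ 2 ≤ 0 := by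
    have := hA v
    rw [hAv, dotProduct_zero] at this
    exact nonpos_of_mul_nonpos_right this hc
  refine hv (funext fun j => pow_eq_zero_iff two_ne_zero |>.1 ?_)
  exact congrFun ((Fintype.sum_eq_zero_iff_of_nonneg fun j => sq_nonneg (v j)).1
    (le_antisymm hv0 (by positivity))) j

theorem sum_sq_inv_mulVec_le (hA : CoerciveWith c A) (hc : 0 < c) (v : ι → ℝ) :
    ∑ k, (A⁻¹ *ᵥ v) k ^ 2 ≤ (∑ k, v k ^ 2) / c ^ 2 := by
  set w := A⁻¹ *ᵥ v
  have hAw : A *ᵥ w = v := by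
    rw [mulVec_mulVec, mul_nonsing_inv A (hA.isUnit_det hc), one_mulVec]
  have hcoer : c * ∑ j, w j ^ 2 ≤ w ⬝ᵥ v := hAw ▸ hA w
  have hcs : (w ⬝ᵥ v) ^ 2 ≤ (∑ j, w j ^ 2) * ∑ k, v k ^ 2 :=
    Finset.sum_mul_sq_le_sq_mul_sq Finset.univ w v
  have hw : 0 ≤ ∑ j, w j ^ 2 := by positivity
  rw [le_div_iff₀ (by positivity)]
  rcases hw.eq_or_lt with hw0 | hwpos
  · rw [← hw0, zero_mul]
    positivity
  · have : (c * ∑ j, w j ^ 2) ^ 2 ≤ (w ⬝ᵥ v) ^ 2 := pow_le_pow_left₀ (by positivity) hcoer 2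
    nlinarith

theorem sum_sq_inv_row_le (hA : CoerciveWith c A) (hc : 0 < c) (j : ι) :
    ∑ k, A⁻¹ j k ^ 2 ≤ 1 / c ^ 2 := by
  have hrow : A⁻¹ j = Aᵀ⁻¹ *ᵥ Pi.single j 1 := by
    rw [mulVec_single_one, ← transpose_nonsing_inv]
    rfl
  have hsingle : ∑ k, (Pi.single j 1 : ι → ℝ) k ^ 2 = 1 := by
    simp [Pi.single_apply]
  have := hA.transpose.sum_sq_inv_mulVec_le hc (Pi.single j 1)
  rwa [hsingle, ← hrow] at this

end CoerciveWith

end Matrix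

section Ridge

variable {ι m : Type*} [Fintype ι] [Fintype m]

theorem sum_sq_mul_transpose_apply (B : Matrix ι ι ℝ) (X : Matrix m ι ℝ) (j : ι) :
    ∑ i, (B * Xᵀ) j i ^ 2 = B j ⬝ᵥ (Xᵀ * X) *ᵥ B j := by
  have hrow : (fun i => (B * Xᵀ) j i) = X *ᵥ B j := by
    ext i
    simp only [mul_apply, transpose_apply, mulVec, dotProduct, mul_comm]
  rw [← mulVec_mulVec, dotProduct_mulVec, vecMul_transpose, dotProduct_comm, ← hrow]
  simp only [dotProduct, sq]

variable [DecidableEq ι]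

theorem sum_sum_sq_inv_mul_transpose_le {A : Matrix ι ι ℝ} {X : Matrix m ι ℝ} {c K : ℝ}
    (hA : CoerciveWith c A) (hc : 0 < c) (hK : 0 ≤ K)
    (hX : ∀ w : ι → ℝ, w ⬝ᵥ (Xᵀ * X) *ᵥ w ≤ K * ∑ j, w j ^ 2) :
    ∑ j, ∑ i, (A⁻¹ * Xᵀ) j i ^ 2 ≤ Fintype.card ι * (K / c ^ 2) := by
  have hrow (j : ι) : ∑ i, (A⁻¹ * Xᵀ) j i ^ 2 ≤ K / c ^ 2 :=
    calc ∑ i, (A⁻¹ * Xᵀ) j i ^ 2 = A⁻¹ j ⬝ᵥ (Xᵀ * X) *ᵥ A⁻¹ j :=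
          sum_sq_mul_transpose_apply _ _ j
      _ ≤ K * ∑ k, A⁻¹ j k ^ 2 := hX _
      _ ≤ K * (1 / c ^ 2) := by gcongr; exact hA.sum_sq_inv_row_le hc j
      _ = K / c ^ 2 := by ring
  calc ∑ j, ∑ i, (A⁻¹ * Xᵀ) j i ^ 2 ≤ ∑ _j : ι, K / c ^ 2 := Finset.sum_le_sum fun j _ => hrow j
    _ = Fintype.card ι * (K / c ^ 2) := by simp

theorem ridge_sub_eq {X : Matrix m ι ℝ} {lam : ℝ} (hu : IsUnit (Xᵀ * X + lam • 1).det)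
    (β : ι → ℝ) (e : m → ℝ) :
    (Xᵀ * X + lam • 1)⁻¹ *ᵥ (Xᵀ *ᵥ (X *ᵥ β + e)) - β =
      ((Xᵀ * X + lam • 1)⁻¹ * Xᵀ) *ᵥ e - lam • ((Xᵀ * X + lam • 1)⁻¹ *ᵥ β) := by
  set A := Xᵀ * X + lam • (1 : Matrix ι ι ℝ)
  have hXX : A⁻¹ * (Xᵀ * X) = 1 - lam • A⁻¹ := by
    rw [show Xᵀ * X = A - lam • 1 by simp [A], Matrix.mul_sub, nonsing_inv_mul A hu,
      Matrix.mul_smul, Matrix.mul_one]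
  rw [mulVec_add, mulVec_add, mulVec_mulVec, mulVec_mulVec, mulVec_mulVec,
    Matrix.mul_assoc, hXX, sub_mulVec, one_mulVec, smul_mulVec]
  abel

end Ridge

section Uncorrelated

variable {Ω ι : Type*} [MeasurableSpace Ω] {μ : Measure Ω} [Fintype ι] {ε : Ω → ι → ℝ} {σ : ℝ}

theorem integrable_sq_dotProduct (hL2 : ∀ i, MemLp (fun ω => ε ω i) 2 μ) (a : ι → ℝ) :
    Integrable (fun ω => (a ⬝ᵥ ε ω) ^ 2) μ := by
  have hprod : ∀ i k, Integrable (fun ω => a i * a k * (ε ω i * ε ω k)) μ :=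
    fun i k => ((hL2 i).integrable_mul (hL2 k)).const_mul _
  simp only [dotProduct, sq, Finset.sum_mul_sum]
  exact integrable_finsetSum _ fun i _ => integrable_finsetSum _ fun k _ =>
    (hprod i k).congr (.of_forall fun ω => by ring)

theorem integral_sq_dotProduct (hL2 : ∀ i, MemLp (fun ω => ε ω i) 2 μ)
    (hvar : ∀ i, ∫ ω, ε ω i ^ 2 ∂μ = σ ^ 2)
    (hcov : ∀ i j, i ≠ j → ∫ ω, ε ω i * ε ω j ∂μ = 0) (a : ι → ℝ) :
    ∫ ω, (a ⬝ᵥ ε ω) ^ 2 ∂μ = σ ^ 2 * ∑ i, a i ^ 2 := by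
  classical
  have hprod : ∀ i k, Integrable (fun ω => ε ω i * ε ω k) μ :=
    fun i k => (hL2 i).integrable_mul (hL2 k)
  have hcross : ∀ i k, ∫ ω, ε ω i * ε ω k ∂μ = if i = k then σ ^ 2 else 0 := by
    intro i k
    split_ifs with hik
    · subst hik
      simpa only [sq] using hvar i
    · exact hcov i k hik
  have hexpand : ∀ ω, (a ⬝ᵥ ε ω) ^ 2 = ∑ i, ∑ k, a i * a k * (ε ω i * ε ω k) := by
    intro ω
    simp only [dotProduct, sq, Finset.sum_mul_sum]
    exact Finset.sum_congr rfl fun i _ => Finset.sum_congr rfl fun k _ => by ring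
  simp_rw [hexpand]
  rw [integral_finsetSum _ fun i _ => integrable_finsetSum _ fun k _ => (hprod i k).const_mul _]
  simp_rw [integral_finsetSum _ fun k _ => (hprod _ k).const_mul _, integral_const_mul, hcross,
    mul_ite, mul_zero, Finset.sum_ite_eq, Finset.mem_univ, if_true, Finset.mul_sum]
  exact Finset.sum_congr rfl fun i _ => by ring

theorem integral_sum_sq_mulVec {κ : Type*} [Fintype κ] (hL2 : ∀ i, MemLp (fun ω => ε ω i) 2 μ)
    (hvar : ∀ i, ∫ ω, ε ω i ^ 2 ∂μ = σ ^ 2)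
    (hcov : ∀ i j, i ≠ j → ∫ ω, ε ω i * ε ω j ∂μ = 0) (M : Matrix κ ι ℝ) :
    ∫ ω, ∑ j, (M *ᵥ ε ω) j ^ 2 ∂μ = σ ^ 2 * ∑ j, ∑ i, M j i ^ 2 := by
  change ∫ ω, ∑ j, (M j ⬝ᵥ ε ω) ^ 2 ∂μ = _
  rw [integral_finsetSum _ fun j _ => integrable_sq_dotProduct hL2 (M j), Finset.mul_sum]
  exact Finset.sum_congr rfl fun j _ => integral_sq_dotProduct hL2 hvar hcov (M j)

end Uncorrelated

theorem sum_sq_sub_le {ι : Type*} [Fintype ι] (u v : ι → ℝ) :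
    ∑ j, (u j - v j) ^ 2 ≤ 2 * ∑ j, u j ^ 2 + 2 * ∑ j, v j ^ 2 := by
  rw [Finset.mul_sum, Finset.mul_sum, ← Finset.sum_add_distrib]
  exact Finset.sum_le_sum fun j _ => by nlinarith [sq_nonneg (u j + v j)]

theorem stmt_10_general {Ω : Type*} [MeasurableSpace Ω] (P : Measure Ω) [IsProbabilityMeasure P]
    {n p : ℕ} (X : Matrix (Fin n) (Fin p) ℝ) (β₀ : Fin p → ℝ)
    (d D : ℝ) (hd : 0 < d) (hD : 0 < D)
    (heig : ∀ v : Fin p → ℝ,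
      (n : ℝ) * d * (∑ j, (v j) ^ 2) ≤ v ⬝ᵥ (Xᵀ * X).mulVec v ∧
      v ⬝ᵥ (Xᵀ * X).mulVec v ≤ (n : ℝ) * D * (∑ j, (v j) ^ 2))
    (σ : ℝ) (ε : Ω → Fin n → ℝ)
    (hL2 : ∀ i, MemLp (fun ω => ε ω i) 2 P)
    (hvar : ∀ i, ∫ ω, (ε ω i) ^ 2 ∂P = σ ^ 2)
    (hcov : ∀ i j, i ≠ j → ∫ ω, ε ω i * ε ω j ∂P = 0)
    (lam : ℝ) (hlam : 0 < lam)
    (βhat : Ω → Fin p → ℝ)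
    (hβhat : ∀ ω, βhat ω =
      (Xᵀ * X + lam • (1 : Matrix (Fin p) (Fin p) ℝ))⁻¹.mulVec
        (Xᵀ.mulVec (X.mulVec β₀ + ε ω))) :
    ∫ ω, ∑ j, (βhat ω j - β₀ j) ^ 2 ∂P ≤
      2 * (lam ^ 2 * (∑ j, (β₀ j) ^ 2) + (n : ℝ) * (p : ℝ) * D * σ ^ 2) /
        ((n : ℝ) * d + lam) ^ 2 := by
  set A := Xᵀ * X + lam • (1 : Matrix (Fin p) (Fin p) ℝ)
  set c := (n : ℝ) * d + lam
  have hc : 0 < c := by positivity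
  have hA : CoerciveWith c A := CoerciveWith.add_smul_one (fun w => (heig w).1) lam
  set M := A⁻¹ * Xᵀ
  set bias := ∑ j, (A⁻¹ *ᵥ β₀) j ^ 2
  have hnoise : Integrable (fun ω => ∑ j, (M *ᵥ ε ω) j ^ 2) P :=
    integrable_finsetSum _ fun j _ => integrable_sq_dotProduct hL2 (M j)
  have hpoint (ω : Ω) :
      ∑ j, (βhat ω j - β₀ j) ^ 2 ≤ 2 * ∑ j, (M *ᵥ ε ω) j ^ 2 + 2 * (lam ^ 2 * bias) := by
    have herr := ridge_sub_eq (hA.isUnit_det hc) β₀ (ε ω)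
    rw [← hβhat] at herr
    have hcoord (j : Fin p) : βhat ω j - β₀ j = (M *ᵥ ε ω) j - lam * (A⁻¹ *ᵥ β₀) j := by
      simpa using congrFun herr j
    have := sum_sq_sub_le (M *ᵥ ε ω) (lam • A⁻¹ *ᵥ β₀)
    simpa only [hcoord, Pi.smul_apply, smul_eq_mul, mul_pow, ← Finset.mul_sum] using this
  calc ∫ ω, ∑ j, (βhat ω j - β₀ j) ^ 2 ∂P
      ≤ ∫ ω, (2 * ∑ j, (M *ᵥ ε ω) j ^ 2 + 2 * (lam ^ 2 * bias)) ∂P :=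
        integral_mono_of_nonneg (.of_forall fun ω => by positivity)
          ((hnoise.const_mul 2).add (integrable_const _)) (.of_forall hpoint)
    _ = 2 * (σ ^ 2 * ∑ j, ∑ i, M j i ^ 2) + 2 * (lam ^ 2 * bias) := by
        rw [integral_add (hnoise.const_mul 2) (integrable_const _), integral_const_mul,
          integral_sum_sq_mulVec hL2 hvar hcov, integral_const, probReal_univ, one_smul]
    _ ≤ 2 * (σ ^ 2 * (p * (n * D / c ^ 2))) + 2 * (lam ^ 2 * ((∑ j, β₀ j ^ 2) / c ^ 2)) := by
        gcongr
        · simpa using sum_sum_sq_inv_mul_transpose_le hA hc (by positivity) fun w => (heig w).2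
        · exact hA.sum_sq_inv_mulVec_le hc β₀
    _ = 2 * (lam ^ 2 * (∑ j, β₀ j ^ 2) + n * p * D * σ ^ 2) / c ^ 2 := by
        field_simp
        ring

/-- Ridge risk bound (equation (18) in the proof of Theorem 1 of the paper): under the
eigenvalue condition `nd‖v‖² ≤ vᵀXᵀXv ≤ nD‖v‖²` and uncorrelated mean-zero errors with
variance `σ²`, the ridge estimator `β̂ = (XᵀX + λI)⁻¹Xᵀy` with `y = Xβ₀ + ε` satisfies
`E‖β̂ − β₀‖² ≤ 2(λ²‖β₀‖² + npDσ²)/(nd + λ)²`. -/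
theorem stmt_10 {Ω : Type*} [MeasurableSpace Ω] (P : Measure Ω) [IsProbabilityMeasure P]
    {n p : ℕ} (X : Matrix (Fin n) (Fin p) ℝ) (β₀ : Fin p → ℝ)
    (d D : ℝ) (hd : 0 < d) (hD : 0 < D)
    (heig : ∀ v : Fin p → ℝ,
      (n : ℝ) * d * (∑ j, (v j) ^ 2) ≤ v ⬝ᵥ (Xᵀ * X).mulVec v ∧
      v ⬝ᵥ (Xᵀ * X).mulVec v ≤ (n : ℝ) * D * (∑ j, (v j) ^ 2))
    (σ : ℝ) (ε : Ω → Fin n → ℝ)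
    (hL2 : ∀ i, MemLp (fun ω => ε ω i) 2 P)
    (hmean : ∀ i, ∫ ω, ε ω i ∂P = 0)
    (hvar : ∀ i, ∫ ω, (ε ω i) ^ 2 ∂P = σ ^ 2)
    (hcov : ∀ i j, i ≠ j → ∫ ω, ε ω i * ε ω j ∂P = 0)
    (lam : ℝ) (hlam : 0 < lam)
    (βhat : Ω → Fin p → ℝ)
    (hβhat : ∀ ω, βhat ω =
      (Xᵀ * X + lam • (1 : Matrix (Fin p) (Fin p) ℝ))⁻¹.mulVec
        (Xᵀ.mulVec (X.mulVec β₀ + ε ω))) :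
    ∫ ω, ∑ j, (βhat ω j - β₀ j) ^ 2 ∂P ≤
      2 * (lam ^ 2 * (∑ j, (β₀ j) ^ 2) + (n : ℝ) * (p : ℝ) * D * σ ^ 2) /
        ((n : ℝ) * d + lam) ^ 2 :=
  stmt_10_general P X β₀ d D hd hD heig σ ε hL2 hvar hcov lam hlam βhat hβhat
end

section
/- Let X be an n × p real matrix, β₀, β̂ ∈ ℝᵖ, ε ∈ ℝⁿ, and L ≥ 0 with vᵀ(XᵀX)v ≤ L‖v‖² for all v ∈ ℝᵖ. Define the residual vector ê = Xβ₀ + ε − Xβ̂, let ê̄ = (1/n)Σ_i ê_i and ε̄ = (1/n)Σ_i ε_i, and set s = √((1/n)Σ_i(ê_i − ê̄)²) and σ̂ = √((1/n)Σ_i(ε_i − ε̄)²). Then |s − σ̂| ≤ √(L/n) · ‖β₀ − β̂‖. -/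
/-!
The centered residuals and the centered errors differ by the centered vector `X(β₀ - β̂)`.
By the reverse triangle inequality in `ℝⁿ`, `√n · |s - σ̂|` is at most the norm of that
vector; centering is an orthogonal projection, so this is at most `‖X(β₀ - β̂)‖`, and
`‖Xv‖² = vᵀXᵀXv ≤ L‖v‖²`.
-/

open Matrix

theorem Finset.sum_sq_sub_mean_le {ι : Type*} (s : Finset ι) (f : ι → ℝ) :
    ∑ i ∈ s, (f i - (∑ j ∈ s, f j) / s.card) ^ 2 ≤ ∑ i ∈ s, f i ^ 2 := by
  set m := (∑ j ∈ s, f j) / s.card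
  -- also for `s = ∅`, where `m = 0 / 0 = 0`
  have hsum : ∑ j ∈ s, f j = s.card * m := by
    rcases s.eq_empty_or_nonempty with rfl | hs
    · simp
    · rw [mul_div_cancel₀ _ (by exact_mod_cast hs.card_pos.ne')]
  have hexpand : ∑ i ∈ s, (f i - m) ^ 2 = ∑ i ∈ s, f i ^ 2 - s.card * m ^ 2 := by
    simp only [sub_sq, Finset.sum_add_distrib, Finset.sum_sub_distrib, ← Finset.sum_mul,
      ← Finset.mul_sum, hsum, Finset.sum_const, nsmul_eq_mul]
    ring
  rw [hexpand]
  nlinarith [sq_nonneg m, s.card.cast_nonneg (α := ℝ)]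

theorem abs_sqrt_sum_sq_sub_sqrt_sum_sq_le {ι : Type*} [Fintype ι] (a b : ι → ℝ) :
    |√(∑ i, a i ^ 2) - √(∑ i, b i ^ 2)| ≤ √(∑ i, (a i - b i) ^ 2) := by
  simpa [EuclideanSpace.norm_eq, sq_abs] using
    abs_norm_sub_norm_le (WithLp.toLp 2 a : EuclideanSpace ℝ ι) (WithLp.toLp 2 b)

theorem Matrix.sum_sq_mulVec {m n : Type*} [Fintype m] [Fintype n] (X : Matrix m n ℝ)
    (v : n → ℝ) : ∑ i, (X *ᵥ v) i ^ 2 = v ⬝ᵥ (Xᵀ * X) *ᵥ v := by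
  rw [← mulVec_mulVec, dotProduct_mulVec, vecMul_transpose]
  simp only [dotProduct, sq]

theorem abs_sqrt_centered_sub_sqrt_centered_le {ι : Type*} [Fintype ι] (a b : ι → ℝ) {N : ℝ}
    (hN : 0 ≤ N) :
    |√((∑ i, (a i - (∑ j, a j) / Fintype.card ι) ^ 2) / N)
        - √((∑ i, (b i - (∑ j, b j) / Fintype.card ι) ^ 2) / N)|
      ≤ √((∑ i, (a i - b i) ^ 2) / N) := by
  rw [Real.sqrt_div' _ hN, Real.sqrt_div' _ hN, Real.sqrt_div' _ hN, ← sub_div, abs_div,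
    abs_of_nonneg (Real.sqrt_nonneg N)]
  gcongr
  have hcenter := Finset.univ.sum_sq_sub_mean_le (fun i => a i - b i)
  rw [Finset.card_univ, Finset.sum_sub_distrib, sub_div] at hcenter
  calc _ ≤ √(∑ i, ((a i - (∑ j, a j) / Fintype.card ι)
          - (b i - (∑ j, b j) / Fintype.card ι)) ^ 2) := abs_sqrt_sum_sq_sub_sqrt_sum_sq_le _ _
    _ ≤ √(∑ i, (a i - b i) ^ 2) := by
      refine Real.sqrt_le_sqrt (le_of_eq_of_le (Finset.sum_congr rfl fun i _ => ?_) hcenter)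
      ring

theorem stmt_13_general {n p : ℕ} (X : Matrix (Fin n) (Fin p) ℝ)
    (β₀ βhat : Fin p → ℝ) (ε : Fin n → ℝ) (L : ℝ)
    (hop : ∀ v : Fin p → ℝ, v ⬝ᵥ (Xᵀ * X).mulVec v ≤ L * ∑ j, (v j) ^ 2)
    (e : Fin n → ℝ) (he : ∀ i, e i = X.mulVec β₀ i + ε i - X.mulVec βhat i)
    (ebar εbar s σhat : ℝ)
    (hebar : ebar = (∑ i, e i) / n)
    (hεbar : εbar = (∑ i, ε i) / n)
    (hs : s = Real.sqrt ((∑ i, (e i - ebar) ^ 2) / n))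
    (hσhat : σhat = Real.sqrt ((∑ i, (ε i - εbar) ^ 2) / n)) :
    |s - σhat| ≤ Real.sqrt (L / n) * Real.sqrt (∑ j, (β₀ j - βhat j) ^ 2) := by
  have hdiff : e - ε = X *ᵥ (β₀ - βhat) := by
    ext i; rw [mulVec_sub, Pi.sub_apply, he, Pi.sub_apply]; ring
  have hnorm : ∑ i, (e i - ε i) ^ 2 ≤ L * ∑ j, (β₀ j - βhat j) ^ 2 := by
    have := hop (β₀ - βhat)
    rw [← Matrix.sum_sq_mulVec, ← hdiff] at this
    simpa only [Pi.sub_apply] using this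
  have hcenter := abs_sqrt_centered_sub_sqrt_centered_le e ε n.cast_nonneg
  rw [Fintype.card_fin, ← hebar, ← hεbar, ← hs, ← hσhat] at hcenter
  calc |s - σhat| ≤ √((∑ i, (e i - ε i) ^ 2) / n) := hcenter
    _ ≤ √(L * (∑ j, (β₀ j - βhat j) ^ 2) / n) := by gcongr
    _ = √(L / n) * √(∑ j, (β₀ j - βhat j) ^ 2) := by
      rw [mul_div_right_comm, Real.sqrt_mul' _ (by positivity)]

/-- Deterministic residual–error standard deviation bound from the proof of Lemma 2 of
the paper: with residuals `ê = Xβ₀ + ε − Xβ̂` and `vᵀXᵀXv ≤ L‖v‖²`,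
`|s − σ̂| ≤ √(L/n)·‖β₀ − β̂‖` where `s`, `σ̂` are the centered root mean squares of
`ê` and `ε`. -/
theorem stmt_13 {n p : ℕ} (X : Matrix (Fin n) (Fin p) ℝ)
    (β₀ βhat : Fin p → ℝ) (ε : Fin n → ℝ) (L : ℝ) (hL : 0 ≤ L)
    (hop : ∀ v : Fin p → ℝ, v ⬝ᵥ (Xᵀ * X).mulVec v ≤ L * ∑ j, (v j) ^ 2)
    (e : Fin n → ℝ) (he : ∀ i, e i = X.mulVec β₀ i + ε i - X.mulVec βhat i)
    (ebar εbar s σhat : ℝ)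
    (hebar : ebar = (∑ i, e i) / n)
    (hεbar : εbar = (∑ i, ε i) / n)
    (hs : s = Real.sqrt ((∑ i, (e i - ebar) ^ 2) / n))
    (hσhat : σhat = Real.sqrt ((∑ i, (ε i - εbar) ^ 2) / n)) :
    |s - σhat| ≤ Real.sqrt (L / n) * Real.sqrt (∑ j, (β₀ j - βhat j) ^ 2) :=
  stmt_13_general X β₀ βhat ε L hop e he ebar εbar s σhat hebar hεbar hs hσhat
end

section
/- Let X be an n × p real matrix, y ∈ ℝⁿ, λ₂ ≥ 0, λ₁ ≥ 0, and ω_1, …, ω_p ≥ 0, and suppose ζ ≥ 0 satisfies ζ‖v‖² ≤ vᵀ(XᵀX)v for all v ∈ ℝᵖ, with ζ + λ₂ > 0. Let β₁ be a minimizer over ℝᵖ of f(β) = ‖y − Xβ‖² + λ₂‖β‖², and let β₂ be a minimizer over ℝᵖ of f(β) + λ₁ Σ_{j=1}^{p} ω_j |β_j|. Then ‖β₂ − β₁‖ ≤ λ₁ ‖ω‖ / (ζ + λ₂), where ‖ω‖ = √(Σ_j ω_j²). -/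
/-! Since `β₁` minimizes the quadratic ridge objective `f`, the first-order term of `f` at `β₁`
vanishes, so with `δ = β₂ - β₁` the gap `f β₂ - f β₁` is exactly `‖Xδ‖² + λ₂‖δ‖² ≥ (ζ + λ₂)‖δ‖²`.
Comparing the penalized objective at `β₂` and at `β₁` bounds the same gap by
`λ₁ Σ ω_j (|β₁_j| - |β₂_j|) ≤ λ₁ ‖ω‖ ‖δ‖` (Cauchy–Schwarz); divide by `‖δ‖`. -/

open Matrix Finset

def ridgeObjective {ι κ : Type*} [Fintype ι] [Fintype κ]
    (X : Matrix κ ι ℝ) (y : κ → ℝ) (lam : ℝ) (β : ι → ℝ) : ℝ :=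
  (∑ i, (y i - X.mulVec β i) ^ 2) + lam * ∑ j, (β j) ^ 2

section Ridge

variable {ι κ : Type*} [Fintype ι] [Fintype κ] (X : Matrix κ ι ℝ) (y : κ → ℝ) (lam : ℝ)

/-- The quadratic part `‖Xδ‖² + λ‖δ‖²` is the objective at zero response. -/
theorem ridgeObjective_add_smul (β δ : ι → ℝ) (t : ℝ) :
    ridgeObjective X y lam (β + t • δ) =
      ridgeObjective X y lam β +
        t * (2 * (lam * ∑ j, β j * δ j - ∑ i, (y i - X.mulVec β i) * X.mulVec δ i)) +
        t ^ 2 * ridgeObjective X 0 lam δ := by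
  have hres : ∑ i, (y i - X.mulVec (β + t • δ) i) ^ 2 =
      ∑ i, (y i - X.mulVec β i) ^ 2 - t * (2 * ∑ i, (y i - X.mulVec β i) * X.mulVec δ i) +
        t ^ 2 * ∑ i, ((0 : κ → ℝ) i - X.mulVec δ i) ^ 2 := by
    simp only [mulVec_add, mulVec_smul, Pi.add_apply, Pi.smul_apply, smul_eq_mul,
      Pi.zero_apply, mul_sum, ← sum_sub_distrib, ← sum_add_distrib]
    exact sum_congr rfl fun i _ => by ring
  have hpen : ∑ j, (β + t • δ) j ^ 2 =
      ∑ j, β j ^ 2 + t * (2 * ∑ j, β j * δ j) + t ^ 2 * ∑ j, δ j ^ 2 := by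
    simp only [Pi.add_apply, Pi.smul_apply, smul_eq_mul, mul_sum, ← sum_add_distrib]
    exact sum_congr rfl fun j _ => by ring
  rw [ridgeObjective, ridgeObjective, ridgeObjective, hres, hpen]
  ring

/-- The linear term `L` vanishes: `t ↦ Q t² + L t` is nonnegative on `ℝ`, so its discriminant
`L²` is nonpositive. -/
theorem ridgeObjective_add_eq_of_forall_le {β₀ : ι → ℝ}
    (hβ₀ : ∀ β, ridgeObjective X y lam β₀ ≤ ridgeObjective X y lam β) (δ : ι → ℝ) :
    ridgeObjective X y lam (β₀ + δ) = ridgeObjective X y lam β₀ + ridgeObjective X 0 lam δ := by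
  set L := 2 * (lam * ∑ j, β₀ j * δ j - ∑ i, (y i - X.mulVec β₀ i) * X.mulVec δ i) with hL_def
  have hdiscrim : discrim (ridgeObjective X 0 lam δ) L 0 ≤ 0 :=
    discrim_le_zero fun t => by
      have := hβ₀ (β₀ + t • δ)
      rw [ridgeObjective_add_smul] at this
      linarith
  have hL : L = 0 := by
    rw [discrim] at hdiscrim
    nlinarith
  have h1 := ridgeObjective_add_smul X y lam β₀ δ 1
  rw [one_smul, ← hL_def, hL] at h1
  linarith

theorem ridgeObjective_zero_eq (δ : ι → ℝ) :
    ridgeObjective X 0 lam δ = δ ⬝ᵥ (Xᵀ * X).mulVec δ + lam * ∑ j, δ j ^ 2 := by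
  rw [ridgeObjective, ← mulVec_mulVec, dotProduct_mulVec, vecMul_transpose]
  simp only [Pi.zero_apply, zero_sub, dotProduct, sq, neg_mul_neg]

end Ridge

theorem sum_mul_abs_sub_sum_mul_abs_le {ι : Type*} [Fintype ι] {ω : ι → ℝ} (hω : ∀ j, 0 ≤ ω j)
    (a b : ι → ℝ) :
    ∑ j, ω j * |a j| - ∑ j, ω j * |b j| ≤
      Real.sqrt (∑ j, ω j ^ 2) * Real.sqrt (∑ j, (b j - a j) ^ 2) :=
  calc ∑ j, ω j * |a j| - ∑ j, ω j * |b j| ≤ ∑ j, ω j * |b j - a j| := by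
        rw [← sum_sub_distrib]
        refine sum_le_sum fun j _ => ?_
        rw [← mul_sub, abs_sub_comm]
        exact mul_le_mul_of_nonneg_left (abs_sub_abs_le_abs_sub _ _) (hω j)
    _ ≤ Real.sqrt (∑ j, ω j ^ 2) * Real.sqrt (∑ j, |b j - a j| ^ 2) :=
        Real.sum_mul_le_sqrt_mul_sqrt _ _ _
    _ = Real.sqrt (∑ j, ω j ^ 2) * Real.sqrt (∑ j, (b j - a j) ^ 2) := by simp only [sq_abs]

theorem le_div_of_mul_sq_le_mul {a b s : ℝ} (ha : 0 < a) (hb : 0 ≤ b) (hs : 0 ≤ s)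
    (h : a * s ^ 2 ≤ b * s) : s ≤ b / a := by
  rw [le_div_iff₀ ha]
  rcases hs.eq_or_lt with rfl | hs
  · simpa using hb
  · exact le_of_mul_le_mul_right (by linarith) hs

theorem stmt_14_general {n p : ℕ} (X : Matrix (Fin n) (Fin p) ℝ) (y : Fin n → ℝ)
    (lam2 lam1 : ℝ) (hlam1 : 0 ≤ lam1)
    (ω : Fin p → ℝ) (hω : ∀ j, 0 ≤ ω j)
    (ζ : ℝ)
    (hmin : ∀ v : Fin p → ℝ, ζ * ∑ j, (v j) ^ 2 ≤ v ⬝ᵥ (Xᵀ * X).mulVec v)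
    (hpos : 0 < ζ + lam2)
    (β₁ β₂ : Fin p → ℝ)
    (h₁ : ∀ β : Fin p → ℝ,
      (∑ i, (y i - X.mulVec β₁ i) ^ 2) + lam2 * ∑ j, (β₁ j) ^ 2 ≤
        (∑ i, (y i - X.mulVec β i) ^ 2) + lam2 * ∑ j, (β j) ^ 2)
    (h₂ : ∀ β : Fin p → ℝ,
      ((∑ i, (y i - X.mulVec β₂ i) ^ 2) + lam2 * ∑ j, (β₂ j) ^ 2) +
          lam1 * ∑ j, ω j * |β₂ j| ≤
        ((∑ i, (y i - X.mulVec β i) ^ 2) + lam2 * ∑ j, (β j) ^ 2) +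
          lam1 * ∑ j, ω j * |β j|) :
    Real.sqrt (∑ j, (β₂ j - β₁ j) ^ 2) ≤
      lam1 * Real.sqrt (∑ j, (ω j) ^ 2) / (ζ + lam2) := by
  have hgrowth : (ζ + lam2) * ∑ j, (β₂ j - β₁ j) ^ 2 ≤
      ridgeObjective X y lam2 β₂ - ridgeObjective X y lam2 β₁ := by
    have hsplit := ridgeObjective_add_eq_of_forall_le X y lam2 h₁ (β₂ - β₁)
    have hcurv := hmin (β₂ - β₁)
    rw [add_sub_cancel, ridgeObjective_zero_eq] at hsplit
    simp only [Pi.sub_apply] at hsplit hcurv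
    linarith
  have hpenalty : ridgeObjective X y lam2 β₂ - ridgeObjective X y lam2 β₁ ≤
      lam1 * (Real.sqrt (∑ j, ω j ^ 2) * Real.sqrt (∑ j, (β₂ j - β₁ j) ^ 2)) := by
    have hl1 := mul_le_mul_of_nonneg_left (sum_mul_abs_sub_sum_mul_abs_le hω β₁ β₂) hlam1
    have hβ₂ : ridgeObjective X y lam2 β₂ + lam1 * ∑ j, ω j * |β₂ j| ≤
        ridgeObjective X y lam2 β₁ + lam1 * ∑ j, ω j * |β₁ j| := h₂ β₁
    linarith
  rw [← Real.sq_sqrt (sum_nonneg fun j _ => sq_nonneg (β₂ j - β₁ j))] at hgrowth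
  exact le_div_of_mul_sq_le_mul hpos (by positivity) (Real.sqrt_nonneg _) (by linarith)

/-- Minimizer perturbation bound (equation (7) in the proof of Theorem 2 of the paper):
if `β₁` minimizes the ridge objective `f(β) = ‖y − Xβ‖² + λ₂‖β‖²` whose smallest
eigenvalue bound is `ζ`, and `β₂` minimizes `f(β) + λ₁ Σ_j ω_j|β_j|`, then
`‖β₂ − β₁‖ ≤ λ₁‖ω‖/(ζ + λ₂)`. -/
theorem stmt_14 {n p : ℕ} (X : Matrix (Fin n) (Fin p) ℝ) (y : Fin n → ℝ)
    (lam2 lam1 : ℝ) (hlam2 : 0 ≤ lam2) (hlam1 : 0 ≤ lam1)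
    (ω : Fin p → ℝ) (hω : ∀ j, 0 ≤ ω j)
    (ζ : ℝ) (hζ : 0 ≤ ζ)
    (hmin : ∀ v : Fin p → ℝ, ζ * ∑ j, (v j) ^ 2 ≤ v ⬝ᵥ (Xᵀ * X).mulVec v)
    (hpos : 0 < ζ + lam2)
    (β₁ β₂ : Fin p → ℝ)
    (h₁ : ∀ β : Fin p → ℝ,
      (∑ i, (y i - X.mulVec β₁ i) ^ 2) + lam2 * ∑ j, (β₁ j) ^ 2 ≤
        (∑ i, (y i - X.mulVec β i) ^ 2) + lam2 * ∑ j, (β j) ^ 2)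
    (h₂ : ∀ β : Fin p → ℝ,
      ((∑ i, (y i - X.mulVec β₂ i) ^ 2) + lam2 * ∑ j, (β₂ j) ^ 2) +
          lam1 * ∑ j, ω j * |β₂ j| ≤
        ((∑ i, (y i - X.mulVec β i) ^ 2) + lam2 * ∑ j, (β j) ^ 2) +
          lam1 * ∑ j, ω j * |β j|) :
    Real.sqrt (∑ j, (β₂ j - β₁ j) ^ 2) ≤
      lam1 * Real.sqrt (∑ j, (ω j) ^ 2) / (ζ + lam2) :=
  stmt_14_general X y lam2 lam1 hlam1 ω hω ζ hmin hpos β₁ β₂ h₁ h₂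
end

section
/- Let X be an n × p real matrix with c > 0 satisfying c‖v‖² ≤ vᵀ(XᵀX)v for all v ∈ ℝᵖ (so XᵀX is invertible with smallest eigenvalue at least c), let β₀ ∈ ℝᵖ and λ ≥ 0. On a probability space, let ε : Ω → ℝⁿ be a random vector with square-integrable components satisfying E[ε_i] = 0, E[ε_i²] = σ², E[ε_i ε_j] = 0 for i ≠ j, let u : Ω → ℝᵖ be a square-integrable random vector, and let β̂ : Ω → ℝᵖ satisfy almost surely β̂ − β₀ = (XᵀX)⁻¹ (Xᵀε − λu). Then E[‖β̂ − β₀‖²] ≤ (2σ² tr(XᵀX) + 2λ² E[‖u‖²]) / c². -/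
/-!
Write `A = XᵀX` and `w = Xᵀε − λu`, so that `β̂ − β₀ = A⁻¹w` almost surely. Coercivity
`c‖v‖² ≤ vᵀAv` together with Cauchy–Schwarz gives `c‖v‖ ≤ ‖Av‖`, hence `‖A⁻¹w‖² ≤ ‖w‖²/c²`,
and `‖w‖² ≤ 2‖Xᵀε‖² + 2λ²‖u‖²`. Finally, since the errors are uncorrelated with common
second moment `σ²`, `E‖Mε‖² = σ² tr(MMᵀ)` for every matrix `M`; with `M = Xᵀ` this is
`σ² tr(XᵀX)`.
-/

open MeasureTheory Matrix

section Coercive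

variable {ι : Type*} [Fintype ι] {A : Matrix ι ι ℝ} {c : ℝ}

lemma sq_mul_sum_sq_le_sum_sq_mulVec (hc : 0 ≤ c) {v : ι → ℝ}
    (hv : c * ∑ j, v j ^ 2 ≤ v ⬝ᵥ A *ᵥ v) :
    c ^ 2 * ∑ j, v j ^ 2 ≤ ∑ j, (A *ᵥ v) j ^ 2 := by
  have hcs : (v ⬝ᵥ A *ᵥ v) ^ 2 ≤ (∑ j, v j ^ 2) * ∑ j, (A *ᵥ v) j ^ 2 :=
    Finset.sum_mul_sq_le_sq_mul_sq _ _ _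
  have hsq : (c * ∑ j, v j ^ 2) ^ 2 ≤ (v ⬝ᵥ A *ᵥ v) ^ 2 :=
    pow_le_pow_left₀ (by positivity) hv 2
  rcases (Finset.sum_nonneg fun j _ => sq_nonneg (v j)).eq_or_lt with h0 | hpos
  · rw [← h0, mul_zero]
    positivity
  · nlinarith

lemma isUnit_of_coercive [DecidableEq ι] (hc : 0 < c)
    (hA : ∀ v : ι → ℝ, c * ∑ j, v j ^ 2 ≤ v ⬝ᵥ A *ᵥ v) : IsUnit A := by
  refine mulVec_injective_iff_isUnit.1 fun v w hvw => sub_eq_zero.1 ?_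
  have hker : A *ᵥ (v - w) = 0 := by rw [mulVec_sub, hvw, sub_self]
  have hcoer := hA (v - w)
  rw [hker, dotProduct_zero] at hcoer
  refine dotProduct_self_eq_zero.1 (le_antisymm ?_ (dotProduct_self_star_nonneg _))
  simpa only [dotProduct, ← sq] using nonpos_of_mul_nonpos_right hcoer hc

lemma sum_sq_inv_mulVec_le [DecidableEq ι] (hc : 0 < c)
    (hA : ∀ v : ι → ℝ, c * ∑ j, v j ^ 2 ≤ v ⬝ᵥ A *ᵥ v) (w : ι → ℝ) :
    ∑ j, (A⁻¹ *ᵥ w) j ^ 2 ≤ (∑ j, w j ^ 2) / c ^ 2 := by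
  have hdet : IsUnit A.det := (isUnit_iff_isUnit_det A).1 (isUnit_of_coercive hc hA)
  have hAw : A *ᵥ (A⁻¹ *ᵥ w) = w := by rw [mulVec_mulVec, mul_nonsing_inv A hdet, one_mulVec]
  have key := sq_mul_sum_sq_le_sum_sq_mulVec hc.le (hA (A⁻¹ *ᵥ w))
  rw [hAw] at key
  rw [le_div_iff₀ (by positivity), mul_comm]
  exact key

end Coercive

lemma sum_sq_sub_smul_le {ι : Type*} [Fintype ι] (a b : ι → ℝ) (t : ℝ) :
    ∑ j, (a - t • b) j ^ 2 ≤ 2 * ∑ j, a j ^ 2 + 2 * t ^ 2 * ∑ j, b j ^ 2 := by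
  rw [Finset.mul_sum, Finset.mul_sum, ← Finset.sum_add_distrib]
  refine Finset.sum_le_sum fun j _ => ?_
  simp only [Pi.sub_apply, Pi.smul_apply, smul_eq_mul]
  nlinarith [sq_nonneg (a j + t * b j)]

section SecondMoments

variable {Ω κ : Type*} [MeasurableSpace Ω] {P : Measure Ω} [Fintype κ] {ε : Ω → κ → ℝ}

lemma memLp_mulVec_apply {ι : Type*} {q : ENNReal} (M : Matrix ι κ ℝ)
    (hε : ∀ k, MemLp (fun ω => ε ω k) q P) (j : ι) : MemLp (fun ω => (M *ᵥ ε ω) j) q P := by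
  simp only [mulVec, dotProduct]
  exact memLp_finsetSum _ fun k _ => (hε k).const_mul (M j k)

variable [DecidableEq κ]

lemma integral_sq_dotProduct_of_uncorrelated (σ : ℝ) (hε : ∀ k, MemLp (fun ω => ε ω k) 2 P)
    (hcov : ∀ k l, ∫ ω, ε ω k * ε ω l ∂P = if k = l then σ ^ 2 else 0) (a : κ → ℝ) :
    ∫ ω, (a ⬝ᵥ ε ω) ^ 2 ∂P = σ ^ 2 * (a ⬝ᵥ a) := by
  have hint : ∀ k l, Integrable (fun ω => a k * a l * (ε ω k * ε ω l)) P := fun k l =>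
    ((hε k).integrable_mul (hε l)).const_mul _
  have hexpand : ∀ ω, (a ⬝ᵥ ε ω) ^ 2 = ∑ k, ∑ l, a k * a l * (ε ω k * ε ω l) := fun ω => by
    rw [sq, dotProduct, Finset.sum_mul_sum]
    exact Finset.sum_congr rfl fun k _ => Finset.sum_congr rfl fun l _ => by ring
  simp_rw [hexpand]
  rw [integral_finsetSum _ fun k _ => integrable_finsetSum _ fun l _ => hint k l]
  simp_rw [integral_finsetSum _ fun l _ => hint _ l, integral_const_mul, hcov, mul_ite,
    mul_zero, Finset.sum_ite_eq, Finset.mem_univ, if_true, dotProduct, Finset.mul_sum]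
  exact Finset.sum_congr rfl fun k _ => by ring

lemma integral_sum_sq_mulVec_of_uncorrelated {ι : Type*} [Fintype ι] (σ : ℝ)
    (hε : ∀ k, MemLp (fun ω => ε ω k) 2 P)
    (hcov : ∀ k l, ∫ ω, ε ω k * ε ω l ∂P = if k = l then σ ^ 2 else 0) (M : Matrix ι κ ℝ) :
    ∫ ω, ∑ j, (M *ᵥ ε ω) j ^ 2 ∂P = σ ^ 2 * (M * Mᵀ).trace := by
  rw [integral_finsetSum _ fun j _ => (memLp_mulVec_apply M hε j).integrable_sq]
  simp only [mulVec, integral_sq_dotProduct_of_uncorrelated σ hε hcov, ← Finset.mul_sum]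
  simp [trace, mul_apply, dotProduct]

end SecondMoments

theorem stmt_15_general {Ω : Type*} [MeasurableSpace Ω] (P : Measure Ω)
    {n p : ℕ} (X : Matrix (Fin n) (Fin p) ℝ) (c : ℝ) (hc : 0 < c)
    (hmin : ∀ v : Fin p → ℝ, c * ∑ j, (v j) ^ 2 ≤ v ⬝ᵥ (Xᵀ * X).mulVec v)
    (β₀ : Fin p → ℝ) (lam : ℝ)
    (σ : ℝ) (ε : Ω → Fin n → ℝ)
    (hL2 : ∀ i, MemLp (fun ω => ε ω i) 2 P)
    (hvar : ∀ i, ∫ ω, (ε ω i) ^ 2 ∂P = σ ^ 2)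
    (hcov : ∀ i j, i ≠ j → ∫ ω, ε ω i * ε ω j ∂P = 0)
    (u : Ω → Fin p → ℝ)
    (huL2 : ∀ j, MemLp (fun ω => u ω j) 2 P)
    (βhat : Ω → Fin p → ℝ)
    (hβhat : ∀ᵐ ω ∂P, βhat ω - β₀ = (Xᵀ * X)⁻¹.mulVec (Xᵀ.mulVec (ε ω) - lam • u ω)) :
    ∫ ω, ∑ j, (βhat ω j - β₀ j) ^ 2 ∂P ≤
      (2 * σ ^ 2 * (Xᵀ * X).trace + 2 * lam ^ 2 * ∫ ω, ∑ j, (u ω j) ^ 2 ∂P) / c ^ 2 := by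
  have hsecond : ∀ i j, ∫ ω, ε ω i * ε ω j ∂P = if i = j then σ ^ 2 else 0 := fun i j => by
    split_ifs with h
    · simpa [h, sq] using hvar j
    · exact hcov i j h
  have hnoise : Integrable (fun ω => ∑ j, (Xᵀ *ᵥ ε ω) j ^ 2) P :=
    integrable_finsetSum _ fun j _ => (memLp_mulVec_apply Xᵀ hL2 j).integrable_sq
  have hpenalty : Integrable (fun ω => ∑ j, u ω j ^ 2) P :=
    integrable_finsetSum _ fun j _ => (huL2 j).integrable_sq
  calc ∫ ω, ∑ j, (βhat ω j - β₀ j) ^ 2 ∂P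
      ≤ ∫ ω, (2 * ∑ j, (Xᵀ *ᵥ ε ω) j ^ 2 + 2 * lam ^ 2 * ∑ j, u ω j ^ 2) / c ^ 2 ∂P := by
        refine integral_mono_of_nonneg (.of_forall fun ω => by positivity)
          (((hnoise.const_mul 2).add (hpenalty.const_mul _)).div_const _) ?_
        filter_upwards [hβhat] with ω hω
        have hsub : ∀ j, βhat ω j - β₀ j = (βhat ω - β₀) j := fun j => rfl
        simp only [hsub, hω]
        exact (sum_sq_inv_mulVec_le hc hmin _).trans <|
          div_le_div_of_nonneg_right (sum_sq_sub_smul_le _ _ _) (by positivity)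
    _ = _ := by
        rw [integral_div, integral_add (hnoise.const_mul 2) (hpenalty.const_mul _),
          integral_const_mul, integral_const_mul,
          integral_sum_sq_mulVec_of_uncorrelated σ hL2 hsecond, transpose_transpose]
        ring

/-- Core inequality of Lemma 3 of the paper: if `c‖v‖² ≤ vᵀXᵀXv`, the errors are
uncorrelated with mean zero and variance `σ²`, `u` is square-integrable, and almost
surely `β̂ − β₀ = (XᵀX)⁻¹(Xᵀε − λu)`, then
`E‖β̂ − β₀‖² ≤ (2σ² tr(XᵀX) + 2λ² E‖u‖²)/c²`. -/
theorem stmt_15 {Ω : Type*} [MeasurableSpace Ω] (P : Measure Ω) [IsProbabilityMeasure P]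
    {n p : ℕ} (X : Matrix (Fin n) (Fin p) ℝ) (c : ℝ) (hc : 0 < c)
    (hmin : ∀ v : Fin p → ℝ, c * ∑ j, (v j) ^ 2 ≤ v ⬝ᵥ (Xᵀ * X).mulVec v)
    (β₀ : Fin p → ℝ) (lam : ℝ) (hlam : 0 ≤ lam)
    (σ : ℝ) (ε : Ω → Fin n → ℝ)
    (hL2 : ∀ i, MemLp (fun ω => ε ω i) 2 P)
    (hmean : ∀ i, ∫ ω, ε ω i ∂P = 0)
    (hvar : ∀ i, ∫ ω, (ε ω i) ^ 2 ∂P = σ ^ 2)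
    (hcov : ∀ i j, i ≠ j → ∫ ω, ε ω i * ε ω j ∂P = 0)
    (u : Ω → Fin p → ℝ)
    (huL2 : ∀ j, MemLp (fun ω => u ω j) 2 P)
    (βhat : Ω → Fin p → ℝ)
    (hβhat : ∀ᵐ ω ∂P, βhat ω - β₀ = (Xᵀ * X)⁻¹.mulVec (Xᵀ.mulVec (ε ω) - lam • u ω)) :
    ∫ ω, ∑ j, (βhat ω j - β₀ j) ^ 2 ∂P ≤
      (2 * σ ^ 2 * (Xᵀ * X).trace + 2 * lam ^ 2 * ∫ ω, ∑ j, (u ω j) ^ 2 ∂P) / c ^ 2 :=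
  stmt_15_general P X c hc hmin β₀ lam σ ε hL2 hvar hcov u huL2 βhat hβhat
end

section
/- Let X and Y be independent real random variables with cumulative distribution functions F and G respectively, both continuous, and suppose F(t) ≤ G(t) for all t ∈ ℝ. Then P(X > Y) ≥ 1/2. If moreover there is an open interval I with F(t) < G(t) for all t ∈ I and P(X ∈ I) > 0, then P(X > Y) > 1/2. -/
/-!
Let `μ`, `ν` be the laws of `X`, `Y`. By independence `P(Y < X) = ∫ ν(-∞, x) dμ(x)`, and this
is `∫ G dμ` because `G` is continuous. Since `μ` has no atoms, `μ ⊗ μ` does not charge the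
diagonal, so by the symmetry `(x, y) ↦ (y, x)` the half-planes `{y ≤ x}` and `{x ≤ y}` both have
mass `1/2`, i.e. `∫ F dμ = 1/2`. Comparing the integrands `F ≤ G` gives the bound, and the strict
inequality on an interval of positive `μ`-mass makes it strict.
-/

open MeasureTheory ProbabilityTheory Set
open scoped ENNReal

theorem MeasureTheory.Measure.prod_diagonal_eq_zero_s18 {α : Type*} [MeasurableSpace α]
    [MeasurableEq α] [MeasurableSingletonClass α] (μ ν : Measure α) [SFinite ν]
    [NullSingletonClass ν] :
    (μ.prod ν) (diagonal α) = 0 := by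
  have hsection (x : α) : Prod.mk x ⁻¹' diagonal α = {x} := by ext y; simp [eq_comm]
  simp [Measure.prod_apply measurableSet_diagonal, hsection]

section LinearOrder

variable {α : Type*} [MeasurableSpace α] [TopologicalSpace α] [LinearOrder α]
  [OrderClosedTopology α] [SecondCountableTopology α] [OpensMeasurableSpace α]

theorem MeasureTheory.lintegral_measure_Iic_eq_half (μ : Measure α) [IsProbabilityMeasure μ]
    [NullSingletonClass μ] :
    ∫⁻ x, μ (Iic x) ∂μ = 1 / 2 := by
  have hmeas : MeasurableSet {p : α × α | p.2 ≤ p.1} :=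
    measurableSet_le measurable_snd measurable_fst
  have hle : (μ.prod μ) {p | p.2 ≤ p.1} = ∫⁻ x, μ (Iic x) ∂μ := Measure.prod_apply hmeas
  have hge : (μ.prod μ) {p | p.1 ≤ p.2} = ∫⁻ x, μ (Iic x) ∂μ := by
    change (μ.prod μ) (Prod.swap ⁻¹' {p | p.2 ≤ p.1}) = _
    rw [← Measure.map_apply measurable_swap hmeas, Measure.prod_swap, hle]
  have hunion : {p : α × α | p.2 ≤ p.1} ∪ {p | p.1 ≤ p.2} = univ := by
    ext p; simp [le_total]
  have hinter : {p : α × α | p.2 ≤ p.1} ∩ {p | p.1 ≤ p.2} = diagonal α := by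
    ext p; simp [le_antisymm_iff, and_comm]
  have hsum := measure_union_add_inter (μ := μ.prod μ) {p : α × α | p.2 ≤ p.1}
    (measurableSet_le measurable_fst measurable_snd)
  rw [hunion, hinter, hle, hge, measure_univ, Measure.prod_diagonal_eq_zero_s18, add_zero] at hsum
  rw [ENNReal.eq_div_iff two_ne_zero ENNReal.ofNat_ne_top, two_mul, hsum]

theorem ProbabilityTheory.IndepFun.measure_lt_eq_lintegral_map_Iio {Ω : Type*}
    [MeasurableSpace Ω] {P : Measure Ω} [IsFiniteMeasure P] {X Y : Ω → α}
    (hXY : IndepFun X Y P) (hX : Measurable X) (hY : Measurable Y) :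
    P {ω | Y ω < X ω} = ∫⁻ x, P.map Y (Iio x) ∂(P.map X) := by
  have hlt : MeasurableSet {p : α × α | p.2 < p.1} :=
    measurableSet_lt measurable_snd measurable_fst
  calc P {ω | Y ω < X ω} = P.map (fun ω ↦ (X ω, Y ω)) {p | p.2 < p.1} :=
        (Measure.map_apply (hX.prodMk hY) hlt).symm
    _ = ((P.map X).prod (P.map Y)) {p | p.2 < p.1} := by
        rw [(indepFun_iff_map_prod_eq_prod_map_map hX.aemeasurable hY.aemeasurable).1 hXY]
    _ = ∫⁻ x, P.map Y (Iio x) ∂(P.map X) := Measure.prod_apply hlt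

end LinearOrder

theorem ProbabilityTheory.nullSingletonClass_of_continuous_cdf (μ : Measure ℝ)
    [IsProbabilityMeasure μ] (hμ : Continuous (cdf μ)) : NullSingletonClass μ where
  measure_singleton x := by
    rw [← measure_cdf μ, StieltjesFunction.measure_singleton,
      hμ.continuousWithinAt.leftLim_eq, sub_self, ENNReal.ofReal_zero]

/-- Stochastic dominance comparison principle: if `X` and `Y` are independent with
continuous CDFs `F ≤ G`, then `P(X > Y) ≥ 1/2`; and if moreover `F < G` on an open
interval charged by `X`, then `P(X > Y) > 1/2`. -/
theorem stmt_18 {Ω : Type*} [MeasurableSpace Ω] (P : Measure Ω) [IsProbabilityMeasure P]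
    (X Y : Ω → ℝ) (hX : Measurable X) (hY : Measurable Y)
    (hindep : IndepFun X Y P)
    (F G : ℝ → ℝ)
    (hF : ∀ t, F t = (P {ω | X ω ≤ t}).toReal)
    (hG : ∀ t, G t = (P {ω | Y ω ≤ t}).toReal)
    (hFcont : Continuous F) (hGcont : Continuous G)
    (hle : ∀ t, F t ≤ G t) :
    (1 : ℝ≥0∞) / 2 ≤ P {ω | Y ω < X ω} ∧
    (∀ a b : ℝ, a < b → (∀ t ∈ Set.Ioo a b, F t < G t) →
      0 < P {ω | X ω ∈ Set.Ioo a b} → (1 : ℝ≥0∞) / 2 < P {ω | Y ω < X ω}) := by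
  have : IsProbabilityMeasure (P.map X) := Measure.isProbabilityMeasure_map hX.aemeasurable
  have : IsProbabilityMeasure (P.map Y) := Measure.isProbabilityMeasure_map hY.aemeasurable
  have hFX : F = cdf (P.map X) := funext fun t ↦ by
    rw [hF, cdf_eq_real, map_measureReal_apply hX measurableSet_Iic]; rfl
  have hGY : G = cdf (P.map Y) := funext fun t ↦ by
    rw [hG, cdf_eq_real, map_measureReal_apply hY measurableSet_Iic]; rfl
  subst hFX hGY
  have := nullSingletonClass_of_continuous_cdf _ hFcont
  have := nullSingletonClass_of_continuous_cdf _ hGcont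
  have hP : P {ω | Y ω < X ω} = ∫⁻ x, ENNReal.ofReal (cdf (P.map Y) x) ∂(P.map X) := by
    simp_rw [hindep.measure_lt_eq_lintegral_map_Iio hX hY, ofReal_cdf,
      measure_congr Iio_ae_eq_Iic]
  have hhalf : ∫⁻ x, ENNReal.ofReal (cdf (P.map X) x) ∂(P.map X) = 1 / 2 := by
    simp_rw [ofReal_cdf, lintegral_measure_Iic_eq_half]
  have hcdf_le (t : ℝ) := ENNReal.ofReal_le_ofReal (hle t)
  rw [hP, ← hhalf]
  refine ⟨lintegral_mono hcdf_le, fun a b _ hlt hpos ↦ ?_⟩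
  have hIoo : (P.map X) (Ioo a b) ≠ 0 := by
    rw [Measure.map_apply hX measurableSet_Ioo]; exact hpos.ne'
  refine lintegral_strict_mono_of_ae_le_of_frequently_ae_lt (by fun_prop) (by simp [hhalf])
    (.of_forall hcdf_le) ((frequently_ae_mem_iff.2 hIoo).mono fun t ht ↦ ?_)
  exact ((ENNReal.ofReal_lt_ofReal_iff_of_nonneg (cdf_nonneg _ t)).2 (hlt t ht)).ne
end
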